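/- Let R be a commutative ring, G a finite p-group, φ : G → R^× a group homomorphism, and suppose R is an integral domain in which p is not invertible. Then R_φ is a direct summand of a permutation RG-module if and only if φ is trivial. -/

import Mathlib

/-!
Let `R_φ → R(G/H) → R_φ` be given by `1 ↦ x` and `g`. Semi-invariance makes all coefficients of `x`
equal to `x(H)` up to units and all values `g(δ_{sH})` equal to `g(δ_H)` up to the same units,
so `g x = [G : H] · x(H) · g(δ_H)`. If `x(H) ≠ 0` then `φ` is trivial on `H`, so for nontrivial
`φ` either `g x = 0` or `H` is proper and `p ∣ [G : H]`. Then `1 = ∑ gᵢ xᵢ ∈ pR`, contradicting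
`pR ≠ R`.
-/

/-- The ideal `I^φ_H = {r ∈ R : (1 - φ(h))·r = 0 for all h ∈ H}`, the annihilator of
`{1 - φ(h) : h ∈ H}`. -/
def Iphi {R : Type*} [CommRing R] {G : Type*} [Group G] (φ : G →* Rˣ) (H : Subgroup G) :
    Ideal R where
  carrier := {r : R | ∀ h ∈ H, (1 - ((φ h : Rˣ) : R)) * r = 0}
  add_mem' := by
    intro a b ha hb h hh
    rw [mul_add, ha h hh, hb h hh, add_zero]
  zero_mem' := by intro h hh; rw [mul_zero]
  smul_mem' := by
    intro c r hr h hh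
    simp only [smul_eq_mul]
    rw [mul_comm c r, ← mul_assoc, hr h hh, zero_mul]

/-- `R_φ` is a direct summand of a permutation `RG`-module: there are finitely many
subgroups `H i` of `G`, `RG`-module maps `f i : R_φ → R(G/H i)` (encoded by the images
`x i` of `1 ∈ R_φ`, which must be `φ`-semi-invariant) and `RG`-module maps
`g i : R(G/H i) → R_φ` (i.e. `R`-linear maps satisfying `g (s • m) = φ(s)·g m`) whose
composite `∑ i, g i ∘ f i` is the identity of `R_φ`. -/
def IsPermSummand (R : Type*) [CommRing R] (G : Type*) [Group G] (φ : G →* Rˣ) : Prop :=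
  ∃ (n : ℕ) (Hs : Fin n → Subgroup G)
    (x : ∀ i, (G ⧸ Hs i) →₀ R)
    (g : ∀ i, ((G ⧸ Hs i) →₀ R) →ₗ[R] R),
    (∀ i (s : G), ((Representation.ofMulAction R G (G ⧸ Hs i)) s (MonoidAlgebra.ofCoeff (x i))).coeff = ((φ s : Rˣ) : R) • x i) ∧
    (∀ i (s : G) (m : (G ⧸ Hs i) →₀ R),
      g i (((Representation.ofMulAction R G (G ⧸ Hs i)) s (MonoidAlgebra.ofCoeff m)).coeff) = ((φ s : Rˣ) : R) * g i m) ∧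
    (∑ i, g i (x i)) = 1

theorem IsPGroup.prime_dvd_index {p : ℕ} [Fact p.Prime] {G : Type*} [Group G]
    (hG : IsPGroup p G) {H : Subgroup G} [H.FiniteIndex] (hH : H ≠ ⊤) : p ∣ H.index := by
  obtain ⟨n, hn⟩ := hG.index H
  have hn0 : n ≠ 0 := by
    rintro rfl
    exact hH (Subgroup.index_eq_one.mp (by simpa using hn))
  exact hn ▸ dvd_pow_self p hn0

section SemiInvariant

variable {R : Type*} [CommRing R] {G : Type*} [Group G] {φ : G →* Rˣ} {H : Subgroup G}
  {x : (G ⧸ H) →₀ R}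

lemma mul_coeff_mk_eq_coeff_one
    (hx : ∀ s : G, (Representation.ofMulAction R G (G ⧸ H) s
      (MonoidAlgebra.ofCoeff x)).coeff = ((φ s : Rˣ) : R) • x)
    (s : G) :
    ((φ s : Rˣ) : R) * x (QuotientGroup.mk s) = x (QuotientGroup.mk 1) := by
  have h := congrArg (fun f : (G ⧸ H) →₀ R => f (QuotientGroup.mk s)) (hx s)
  simp only [Representation.coeff_ofMulAction, Finsupp.smul_apply, smul_eq_mul,
    MulAction.Quotient.smul_mk, inv_mul_cancel] at h
  exact h.symm

lemma le_ker_of_coeff_one_ne_zero [NoZeroDivisors R]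
    (hx : ∀ s : G, (Representation.ofMulAction R G (G ⧸ H) s
      (MonoidAlgebra.ofCoeff x)).coeff = ((φ s : Rˣ) : R) • x)
    (hx1 : x (QuotientGroup.mk 1) ≠ 0) : H ≤ φ.ker := by
  intro h hh
  have hmk : (QuotientGroup.mk h : G ⧸ H) = QuotientGroup.mk 1 :=
    QuotientGroup.eq.mpr (by simpa using H.inv_mem hh)
  have hfix := mul_coeff_mk_eq_coeff_one hx h
  rw [hmk, ← sub_eq_zero, ← sub_one_mul, mul_eq_zero, sub_eq_zero] at hfix
  exact MonoidHom.mem_ker.mpr (Units.val_eq_one.mp (hfix.resolve_right hx1))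

lemma map_eq_index_mul [H.FiniteIndex] (g : ((G ⧸ H) →₀ R) →ₗ[R] R)
    (hx : ∀ s : G, (Representation.ofMulAction R G (G ⧸ H) s
      (MonoidAlgebra.ofCoeff x)).coeff = ((φ s : Rˣ) : R) • x)
    (hg : ∀ (s : G) (m : (G ⧸ H) →₀ R),
      g ((Representation.ofMulAction R G (G ⧸ H) s (MonoidAlgebra.ofCoeff m)).coeff) =
        ((φ s : Rˣ) : R) * g m) :
    g x = H.index * (x (QuotientGroup.mk 1) * g (Finsupp.single (QuotientGroup.mk 1) 1)) := by
  let := Fintype.ofFinite (G ⧸ H)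
  have hterm (a : G ⧸ H) : x a * g (Finsupp.single a 1) =
      x (QuotientGroup.mk 1) * g (Finsupp.single (QuotientGroup.mk 1) 1) := by
    induction a using QuotientGroup.induction_on with
    | H s =>
      have hsingle : Finsupp.single (QuotientGroup.mk s : G ⧸ H) (1 : R) =
          (Representation.ofMulAction R G (G ⧸ H) s
            (MonoidAlgebra.ofCoeff (Finsupp.single (QuotientGroup.mk 1) 1))).coeff := by
        simp [MonoidAlgebra.ofCoeff_single]
      rw [hsingle, hg s, mul_left_comm, ← mul_assoc, mul_coeff_mk_eq_coeff_one hx s]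
  calc g x = ∑ a : G ⧸ H, x a * g (Finsupp.single a 1) := by
        conv_lhs => rw [← Finsupp.univ_sum_single x]
        simp only [map_sum, ← smul_eq_mul, ← g.map_smul, Finsupp.smul_single_one]
    _ = H.index * (x (QuotientGroup.mk 1) * g (Finsupp.single (QuotientGroup.mk 1) 1)) := by
        rw [Finset.sum_congr rfl fun a _ => hterm a, Finset.sum_const, Finset.card_univ,
          nsmul_eq_mul, Subgroup.index, Nat.card_eq_fintype_card]

end SemiInvariant

theorem IsPermSummand.eq_one {R : Type*} [CommRing R] [NoZeroDivisors R] {G : Type*} [Group G]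
    [Finite G] {p : ℕ} [Fact p.Prime] (hG : IsPGroup p G) (hp : ¬ IsUnit (p : R))
    {φ : G →* Rˣ} (h : IsPermSummand R G φ) : φ = 1 := by
  by_contra hφ
  obtain ⟨n, Hs, x, g, hx, hg, hsum⟩ := h
  have hdvd (i : Fin n) : (p : R) ∣ g i (x i) := by
    rw [map_eq_index_mul (g i) (hx i) (hg i)]
    by_cases hx1 : x i (QuotientGroup.mk 1) = 0
    · simp [hx1]
    have hne : Hs i ≠ ⊤ := fun htop => hφ <| MonoidHom.ker_eq_top_iff.mp <|
      top_le_iff.mp (htop ▸ le_ker_of_coeff_one_ne_zero (hx i) hx1)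
    exact Dvd.dvd.mul_right (Nat.cast_dvd_cast (hG.prime_dvd_index hne)) _
  exact hp (isUnit_of_dvd_one (hsum ▸ Finset.dvd_sum fun i _ => hdvd i))

theorem isPermSummand_one (R : Type*) [CommRing R] (G : Type*) [Group G] :
    IsPermSummand R G 1 := by
  have : Subsingleton (G ⧸ (⊤ : Subgroup G)) := QuotientGroup.subsingleton_quotient_top
  refine ⟨1, fun _ => ⊤, fun _ => Finsupp.single (QuotientGroup.mk 1) 1,
    fun _ => Finsupp.lapply (QuotientGroup.mk 1), fun _ s => ?_, fun _ s m => ?_, ?_⟩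
  · simp [MonoidAlgebra.ofCoeff_single, Subsingleton.elim (s • _) (QuotientGroup.mk 1 : G ⧸ ⊤)]
  · simp [Subsingleton.elim (s⁻¹ • _) (QuotientGroup.mk 1 : G ⧸ ⊤)]
  · simp

/-- if `G` is a finite `p`-group and `R` is an integral domain in which `p`
is not invertible, then `R_φ` is a direct summand of a permutation `RG`-module if and
only if `φ` is trivial. -/
theorem stmt8 (R : Type*) [CommRing R] [IsDomain R] (G : Type*) [Group G] [Finite G]
    (p : ℕ) (hp : p.Prime) (hG : IsPGroup p G) (hnp : ¬ IsUnit ((p : ℕ) : R))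
    (φ : G →* Rˣ) :
    IsPermSummand R G φ ↔ φ = 1 := by
  have : Fact p.Prime := ⟨hp⟩
  refine ⟨IsPermSummand.eq_one hG hnp, ?_⟩
  rintro rfl
  exact isPermSummand_one R G
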